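/- arXiv:2310.01679 — 5 statements merged into one kernel-verified Lean document; each statement's English description precedes it below -/
import Mathlib

section
/- Let B be {0,1}-valued with 0 < P(B=1) < 1, b = E[B | Z] for some Z (so E[b] = E[B] and b is calibrated: E[B | b] = b a.s.), and f a bounded random variable. Define the true disparity D := E[f | B=1] − E[f | B=0] and the probabilistic estimator D^P := Cov(f, b) / (E[b](1−E[b])). Then D^P = D − E[Cov(f, B | b)] / Var(B). -/
open MeasureTheory

/-- Decomposition of the probabilistic estimator:
`D^P = D - E[Cov(f, B | b)] / Var(B)` for Bernoulli `B`, calibrated proxy `b = E[B|σ(Z)]`,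
and bounded `f`. -/
theorem stmt_5 {Ω : Type*} [MeasurableSpace Ω] (μ : Measure Ω) [IsProbabilityMeasure μ]
    (B Z f : Ω → ℝ) (hB : Measurable B) (hZ : Measurable Z) (hf : Measurable f)
    (hBval : ∀ ω, B ω = 0 ∨ B ω = 1)
    (Cf : ℝ) (hfbdd : ∀ ω, |f ω| ≤ Cf)
    (h0 : 0 < (μ {ω | B ω = 1}).toReal) (h1 : (μ {ω | B ω = 1}).toReal < 1)
    (b : Ω → ℝ) (hb : b = condExp (MeasurableSpace.comap Z inferInstance) μ B)
    (D : ℝ)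
    (hD : D = (∫ ω in {ω | B ω = 1}, f ω ∂μ) / (μ {ω | B ω = 1}).toReal
        - (∫ ω in {ω | B ω = 0}, f ω ∂μ) / (μ {ω | B ω = 0}).toReal)
    (DP : ℝ)
    (hDP : DP = ((∫ ω, f ω * b ω ∂μ) - (∫ ω, f ω ∂μ) * (∫ ω, b ω ∂μ))
        / ((∫ ω, b ω ∂μ) * (1 - ∫ ω, b ω ∂μ))) :
    DP = D -
      (∫ ω, (condExp (MeasurableSpace.comap b inferInstance) μ (fun ω' => f ω' * B ω') ω
          - condExp (MeasurableSpace.comap b inferInstance) μ f ω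
            * condExp (MeasurableSpace.comap b inferInstance) μ B ω) ∂μ)
        / ((∫ ω, B ω * B ω ∂μ) - (∫ ω, B ω ∂μ) ^ 2) := by
  have hm : MeasurableSpace.comap Z inferInstance ≤ _ := measurable_iff_comap_le.mp hZ
  haveI : SigmaFinite (μ.trim hm) := by
    have : IsFiniteMeasure (μ.trim hm) := isFiniteMeasure_trim hm
    infer_instance
  have hbm : StronglyMeasurable[MeasurableSpace.comap Z inferInstance] b :=
    hb ▸ stronglyMeasurable_condExp
  have hbMeas : Measurable b := fun s hs => hm _ (hbm.measurable hs)
  have hmb_le_m : MeasurableSpace.comap b inferInstance ≤ MeasurableSpace.comap Z inferInstance :=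
    measurable_iff_comap_le.mp hbm.measurable
  have hmb : MeasurableSpace.comap b inferInstance ≤ _ := hmb_le_m.trans hm
  haveI : SigmaFinite (μ.trim hmb) := by
    have : IsFiniteMeasure (μ.trim hmb) := isFiniteMeasure_trim hmb
    infer_instance
  have hbmb : StronglyMeasurable[MeasurableSpace.comap b inferInstance] b :=
    (measurable_iff_comap_le.mpr le_rfl :
      Measurable[MeasurableSpace.comap b inferInstance] b).stronglyMeasurable
  -- integrabilities
  have hB1 : ∀ ω, |B ω| ≤ 1 := by
    intro ω; rcases hBval ω with h | h <;> rw [h] <;> norm_num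
  have hBi : Integrable B μ := by
    refine Integrable.mono' (integrable_const 1) hB.aestronglyMeasurable ?_
    exact Filter.Eventually.of_forall fun ω => by simpa using hB1 ω
  have hfi : Integrable f μ := by
    refine Integrable.mono' (integrable_const Cf) hf.aestronglyMeasurable ?_
    exact Filter.Eventually.of_forall fun ω => by simpa using hfbdd ω
  have hfBi : Integrable (fun ω => f ω * B ω) μ :=
    hBi.bdd_mul (c := Cf) hf.aestronglyMeasurable (Filter.Eventually.of_forall fun ω => by simpa using hfbdd ω)
  have hbi : Integrable b μ := hb ▸ integrable_condExp
  have hfbi : Integrable (fun ω => f ω * b ω) μ :=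
    hbi.bdd_mul (c := Cf) hf.aestronglyMeasurable (Filter.Eventually.of_forall fun ω => by simpa using hfbdd ω)
  -- E[b] = E[B]
  have hEb : ∫ ω, b ω ∂μ = ∫ ω, B ω ∂μ := by rw [hb]; exact integral_condExp hm
  -- calibration : E[B | mb] =ᵐ b
  have hcal : condExp (MeasurableSpace.comap b inferInstance) μ B =ᵐ[μ] b := by
    have h1' : condExp (MeasurableSpace.comap b inferInstance) μ
          (condExp (MeasurableSpace.comap Z inferInstance) μ B)
        =ᵐ[μ] condExp (MeasurableSpace.comap b inferInstance) μ B :=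
      condExp_condExp_of_le hmb_le_m hm
    have h2' : condExp (MeasurableSpace.comap b inferInstance) μ b = b :=
      condExp_of_stronglyMeasurable hmb hbmb hbi
    calc condExp (MeasurableSpace.comap b inferInstance) μ B
        =ᵐ[μ] condExp (MeasurableSpace.comap b inferInstance) μ
          (condExp (MeasurableSpace.comap Z inferInstance) μ B) := h1'.symm
      _ = condExp (MeasurableSpace.comap b inferInstance) μ b := by rw [← hb]
      _ = b := h2'
  -- ∫ E[fB|mb] = ∫ fB
  have hI1 : ∫ ω, condExp (MeasurableSpace.comap b inferInstance) μ (fun ω' => f ω' * B ω') ω ∂μ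
      = ∫ ω, f ω * B ω ∂μ := integral_condExp hmb
  -- ∫ E[f|mb] * E[B|mb] = ∫ f b
  have hI2 : ∫ ω, condExp (MeasurableSpace.comap b inferInstance) μ f ω
        * condExp (MeasurableSpace.comap b inferInstance) μ B ω ∂μ
      = ∫ ω, f ω * b ω ∂μ := by
    have hbf_int : Integrable (b * f) μ := by
      have := hfbi
      exact this.congr (Filter.Eventually.of_forall fun ω => mul_comm (f ω) (b ω))
    have hmul : condExp (MeasurableSpace.comap b inferInstance) μ (b * f)
        =ᵐ[μ] b * condExp (MeasurableSpace.comap b inferInstance) μ f :=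
      condExp_mul_of_stronglyMeasurable_left hbmb hbf_int hfi
    have e1 : (fun ω => condExp (MeasurableSpace.comap b inferInstance) μ f ω
          * condExp (MeasurableSpace.comap b inferInstance) μ B ω)
        =ᵐ[μ] fun ω => b ω * condExp (MeasurableSpace.comap b inferInstance) μ f ω := by
      filter_upwards [hcal] with ω hω
      rw [hω, mul_comm]
    calc ∫ ω, condExp (MeasurableSpace.comap b inferInstance) μ f ω
          * condExp (MeasurableSpace.comap b inferInstance) μ B ω ∂μ
        = ∫ ω, b ω * condExp (MeasurableSpace.comap b inferInstance) μ f ω ∂μ :=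
          integral_congr_ae e1
      _ = ∫ ω, condExp (MeasurableSpace.comap b inferInstance) μ (b * f) ω ∂μ :=
          (integral_congr_ae hmul).symm
      _ = ∫ ω, (b * f) ω ∂μ := integral_condExp hmb
      _ = ∫ ω, f ω * b ω ∂μ := by simp [mul_comm]
  -- Bernoulli structure
  have hs1 : MeasurableSet {ω | B ω = 1} := hB (measurableSet_singleton 1)
  have hp : ∫ ω, B ω ∂μ = (μ {ω | B ω = 1}).toReal := by
    have e : ∫ ω, B ω ∂μ
        = ∫ ω, Set.indicator {ω | B ω = 1} (fun _ => (1 : ℝ)) ω ∂μ := by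
      refine integral_congr_ae (Filter.Eventually.of_forall fun ω => ?_)
      rcases hBval ω with h | h
      · rw [Set.indicator_of_notMem (show ω ∉ {ω | B ω = 1} by simp [Set.mem_setOf_eq, h])]
        exact h
      · rw [Set.indicator_of_mem (show ω ∈ {ω | B ω = 1} from h)]
        exact h
    rw [e, integral_indicator hs1]
    simp [Measure.real]
  have hBB : ∫ ω, B ω * B ω ∂μ = ∫ ω, B ω ∂μ := by
    refine integral_congr_ae (Filter.Eventually.of_forall fun ω => ?_)
    rcases hBval ω with h | h <;> simp [h]
  have hfB : ∫ ω, f ω * B ω ∂μ = ∫ ω in {ω | B ω = 1}, f ω ∂μ := by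
    rw [← integral_indicator hs1]
    refine integral_congr_ae (Filter.Eventually.of_forall fun ω => ?_)
    rcases hBval ω with h | h
    · rw [Set.indicator_of_notMem (show ω ∉ {ω | B ω = 1} by simp [Set.mem_setOf_eq, h])]
      simp [h]
    · rw [Set.indicator_of_mem (show ω ∈ {ω | B ω = 1} from h)]
      simp [h]
  have hcompl : {ω | B ω = 0} = {ω | B ω = 1}ᶜ := by
    ext ω
    rcases hBval ω with h | h <;> simp [Set.mem_setOf_eq, h]
  have hsplit : (∫ ω in {ω | B ω = 1}, f ω ∂μ) + (∫ ω in {ω | B ω = 0}, f ω ∂μ)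
      = ∫ ω, f ω ∂μ := by
    rw [hcompl]
    exact integral_add_compl hs1 hfi
  have hq : (μ {ω | B ω = 0}).toReal = 1 - (μ {ω | B ω = 1}).toReal := by
    rw [hcompl, prob_compl_eq_one_sub hs1,
      ENNReal.toReal_sub_of_le prob_le_one (by simp)]
    simp
  -- put it together
  set p : ℝ := (μ {ω | B ω = 1}).toReal with hp_def
  set I1 : ℝ := ∫ ω in {ω | B ω = 1}, f ω ∂μ
  set I0 : ℝ := ∫ ω in {ω | B ω = 0}, f ω ∂μ
  set Fb : ℝ := ∫ ω, f ω * b ω ∂μ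
  have hcb : ∀ᵐ ω ∂μ, |condExp (MeasurableSpace.comap b inferInstance) μ f ω|
      ≤ (Real.toNNReal Cf : ℝ) := by
    refine ae_bdd_condExp_of_ae_bdd (Filter.Eventually.of_forall fun ω => ?_)
    exact (hfbdd ω).trans (Real.le_coe_toNNReal Cf)
  have hprod_int : Integrable (fun ω => condExp (MeasurableSpace.comap b inferInstance) μ f ω
      * condExp (MeasurableSpace.comap b inferInstance) μ B ω) μ := by
    refine Integrable.bdd_mul (c := (Real.toNNReal Cf : ℝ)) integrable_condExp
      (stronglyMeasurable_condExp.mono hmb).aestronglyMeasurable ?_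
    filter_upwards [hcb] with ω hω
    simpa [Real.norm_eq_abs] using hω
  have hint_sub : ∫ ω, (condExp (MeasurableSpace.comap b inferInstance) μ
        (fun ω' => f ω' * B ω') ω
      - condExp (MeasurableSpace.comap b inferInstance) μ f ω
        * condExp (MeasurableSpace.comap b inferInstance) μ B ω) ∂μ = I1 - Fb := by
    rw [integral_sub integrable_condExp hprod_int, hI1, hI2, hfB]
  have hF : ∫ ω, f ω ∂μ = I1 + I0 := hsplit.symm
  have hp0 : p ≠ 0 := ne_of_gt h0
  have hp1 : (1 : ℝ) - p ≠ 0 := sub_ne_zero.mpr (by linarith)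
  have hpp : p - p ^ 2 ≠ 0 := by
    have : p - p ^ 2 = p * (1 - p) := by ring
    rw [this]
    exact mul_ne_zero hp0 hp1
  rw [hDP, hD, hint_sub, hBB, hEb, hp, hF, hq]
  field_simp
  ring
end

section
/- Let B be {0,1}-valued with 0 < P(B=1) < 1, b = E[B | Z] with Var(b) > 0, and f a bounded random variable. Define the true disparity D := E[f|B=1] − E[f|B=0] and the linear estimator D^L := Cov(f, b) / Var(b). Then D^L = D + E[Cov(f, b | B)] / Var(b), where Cov(f, b | B) denotes the conditional covariance of f and b given B. -/
open MeasureTheory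

lemma comap_const_on_fiber {Ω : Type*} {B g : Ω → ℝ}
    (hg : Measurable[MeasurableSpace.comap B inferInstance] g)
    {ω ω' : Ω} (h : B ω = B ω') : g ω = g ω' := by
  obtain ⟨t, -, ht⟩ := hg (measurableSet_singleton (g ω))
  have hω : ω ∈ B ⁻¹' t := by rw [ht]; exact rfl
  have hω' : ω' ∈ B ⁻¹' t := by simpa [Set.mem_preimage, ← h] using hω
  rw [ht] at hω'
  exact hω'.symm


/-- Decomposition of the linear estimator:
`D^L = D + E[Cov(f, b | B)] / Var(b)` for Bernoulli `B`, proxy `b = E[B|σ(Z)]` with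
`Var(b) > 0`, and bounded `f`. -/
theorem stmt_6 {Ω : Type*} [MeasurableSpace Ω] (μ : Measure Ω) [IsProbabilityMeasure μ]
    (B Z f : Ω → ℝ) (hB : Measurable B) (hZ : Measurable Z) (hf : Measurable f)
    (hBval : ∀ ω, B ω = 0 ∨ B ω = 1)
    (Cf : ℝ) (hfbdd : ∀ ω, |f ω| ≤ Cf)
    (h0 : 0 < (μ {ω | B ω = 1}).toReal) (h1 : (μ {ω | B ω = 1}).toReal < 1)
    (b : Ω → ℝ) (hb : b = condExp (MeasurableSpace.comap Z inferInstance) μ B)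
    (Varb : ℝ) (hVarb : Varb = (∫ ω, b ω * b ω ∂μ) - (∫ ω, b ω ∂μ) ^ 2)
    (hVarbpos : 0 < Varb)
    (D : ℝ)
    (hD : D = (∫ ω in {ω | B ω = 1}, f ω ∂μ) / (μ {ω | B ω = 1}).toReal
        - (∫ ω in {ω | B ω = 0}, f ω ∂μ) / (μ {ω | B ω = 0}).toReal)
    (DL : ℝ)
    (hDL : DL = ((∫ ω, f ω * b ω ∂μ) - (∫ ω, f ω ∂μ) * (∫ ω, b ω ∂μ)) / Varb) :
    DL = D +
      (∫ ω, (condExp (MeasurableSpace.comap B inferInstance) μ (fun ω' => f ω' * b ω') ω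
          - condExp (MeasurableSpace.comap B inferInstance) μ f ω
            * condExp (MeasurableSpace.comap B inferInstance) μ b ω) ∂μ)
        / Varb := by
  have hm := hB.comap_le
  have hm' := hZ.comap_le
  haveI : SigmaFinite (μ.trim hm) := inferInstance
  haveI : SigmaFinite (μ.trim hm') := inferInstance
  set s1 : Set Ω := {ω | B ω = 1} with hs1def
  set s0 : Set Ω := {ω | B ω = 0} with hs0def
  have hs1 : MeasurableSet s1 := hB (measurableSet_singleton 1)
  have hs0c : s0 = s1ᶜ := by
    ext ω
    rcases hBval ω with h | h <;> simp [hs0def, hs1def, h]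
  have hs0 : MeasurableSet s0 := hs0c ▸ hs1.compl
  have hs1m : MeasurableSet[MeasurableSpace.comap B inferInstance] s1 :=
    ⟨{1}, measurableSet_singleton 1, rfl⟩
  have hs0m : MeasurableSet[MeasurableSpace.comap B inferInstance] s0 :=
    ⟨{0}, measurableSet_singleton 0, rfl⟩
  set p : ℝ := (μ s1).toReal with hpdef
  set q : ℝ := (μ s0).toReal with hqdef
  have hq : q = 1 - p := by
    rw [hqdef, hs0c, measure_compl hs1 (measure_ne_top μ _), measure_univ,
      ENNReal.toReal_sub_of_le prob_le_one ENNReal.one_ne_top, ENNReal.toReal_one]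
  have hqpos : 0 < q := by rw [hq]; linarith
  -- witnesses in each fiber
  obtain ⟨ω1, hω1⟩ : s1.Nonempty := by
    refine nonempty_of_measure_ne_zero (μ := μ) fun h => ?_
    rw [hpdef] at h0; rw [h] at h0; simp at h0
  obtain ⟨ω0, hω0⟩ : s0.Nonempty := by
    refine nonempty_of_measure_ne_zero (μ := μ) fun h => ?_
    rw [hqdef, h] at hqpos; simp at hqpos
  have hBω1 : B ω1 = 1 := hω1
  have hBω0 : B ω0 = 0 := hω0
  have hCf0 : 0 ≤ Cf := (abs_nonneg _).trans (hfbdd ω1)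
  -- integrability
  have hfint : Integrable f μ :=
    Integrable.mono' (integrable_const Cf) hf.aestronglyMeasurable
      (ae_of_all _ fun ω => by simpa using hfbdd ω)
  have hBbd : ∀ ω, |B ω| ≤ 1 := by
    intro ω; rcases hBval ω with h | h <;> simp [h]
  have hBint : Integrable B μ :=
    Integrable.mono' (integrable_const 1) hB.aestronglyMeasurable
      (ae_of_all _ fun ω => by simpa using hBbd ω)
  have hbint : Integrable b μ := hb ▸ integrable_condExp
  have hbbd : ∀ᵐ ω ∂μ, |b ω| ≤ 1 := by
    rw [hb]
    have := ae_bdd_condExp_of_ae_bdd (m := MeasurableSpace.comap Z inferInstance)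
      (μ := μ) (f := B) (R := 1) (ae_of_all _ fun ω => by simpa using hBbd ω)
    simpa using this
  have hbsm : AEStronglyMeasurable b μ := hbint.1
  have hfbint : Integrable (fun ω => f ω * b ω) μ := by
    refine Integrable.mono' (integrable_const Cf) (hf.aestronglyMeasurable.mul hbsm) ?_
    filter_upwards [hbbd] with ω hω
    have := mul_le_mul (hfbdd ω) hω (abs_nonneg _) hCf0
    simpa [abs_mul] using this
  have hbbint : Integrable (fun ω => b ω * b ω) μ := by
    refine Integrable.mono' (integrable_const 1) (hbsm.mul hbsm) ?_
    filter_upwards [hbbd] with ω hω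
    have := mul_le_mul hω hω (abs_nonneg _) zero_le_one
    simpa [abs_mul] using this
  have hbBint : Integrable (fun ω => b ω * B ω) μ := by
    refine Integrable.mono' (integrable_const 1) (hbsm.mul hB.aestronglyMeasurable) ?_
    filter_upwards [hbbd] with ω hω
    have := mul_le_mul hω (hBbd ω) (abs_nonneg _) zero_le_one
    simpa [abs_mul] using this
  -- the three conditional expectations
  set g1 : Ω → ℝ := condExp (MeasurableSpace.comap B inferInstance) μ
    (fun ω' => f ω' * b ω') with hg1def
  set g2 : Ω → ℝ := condExp (MeasurableSpace.comap B inferInstance) μ f with hg2def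
  set g3 : Ω → ℝ := condExp (MeasurableSpace.comap B inferInstance) μ b with hg3def
  have hg2m : Measurable[MeasurableSpace.comap B inferInstance] g2 :=
    stronglyMeasurable_condExp.measurable
  have hg3m : Measurable[MeasurableSpace.comap B inferInstance] g3 :=
    stronglyMeasurable_condExp.measurable
  -- constancy on fibers
  have hconst1 : ∀ (g : Ω → ℝ), Measurable[MeasurableSpace.comap B inferInstance] g →
      ∀ ω ∈ s1, g ω = g ω1 := by
    intro g hg ω hω
    exact comap_const_on_fiber hg (by rw [show B ω = 1 from hω, hBω1])
  have hconst0 : ∀ (g : Ω → ℝ), Measurable[MeasurableSpace.comap B inferInstance] g →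
      ∀ ω ∈ s0, g ω = g ω0 := by
    intro g hg ω hω
    exact comap_const_on_fiber hg (by rw [show B ω = 0 from hω, hBω0])
  -- splitting integrals
  have hsplit : ∀ (g : Ω → ℝ), Integrable g μ →
      ∫ ω, g ω ∂μ = (∫ ω in s1, g ω ∂μ) + ∫ ω in s0, g ω ∂μ := by
    intro g hg
    rw [hs0c]
    exact (integral_add_compl hs1 hg).symm
  -- constant set integrals
  have hsconst1 : ∀ (g : Ω → ℝ), Measurable[MeasurableSpace.comap B inferInstance] g →
      ∫ ω in s1, g ω ∂μ = g ω1 * p := by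
    intro g hg
    rw [setIntegral_congr_fun hs1 (hconst1 g hg), setIntegral_const, smul_eq_mul, mul_comm]; rfl
  have hsconst0 : ∀ (g : Ω → ℝ), Measurable[MeasurableSpace.comap B inferInstance] g →
      ∫ ω in s0, g ω ∂μ = g ω0 * q := by
    intro g hg
    rw [setIntegral_congr_fun hs0 (hconst0 g hg), setIntegral_const, smul_eq_mul, mul_comm]; rfl
  -- values of g2, g3
  set F1 : ℝ := ∫ ω in s1, f ω ∂μ with hF1def
  set F0 : ℝ := ∫ ω in s0, f ω ∂μ with hF0def
  set S : ℝ := ∫ ω, b ω * b ω ∂μ with hSdef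
  have hg2v1 : g2 ω1 * p = F1 := by
    rw [← hsconst1 g2 hg2m, hg2def, setIntegral_condExp hm hfint hs1m]
  have hg2v0 : g2 ω0 * q = F0 := by
    rw [← hsconst0 g2 hg2m, hg2def, setIntegral_condExp hm hfint hs0m]
  -- ∫ B = p
  have hintB : ∫ ω, B ω ∂μ = p := by
    rw [hsplit B hBint,
      setIntegral_congr_fun hs1 (fun ω hω => show B ω = 1 from hω),
      setIntegral_congr_fun hs0 (fun ω hω => show B ω = 0 from hω)]
    simp [hpdef]; rfl
  -- ∫ b = p
  have hintb : ∫ ω, b ω ∂μ = p := by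
    rw [hb, integral_condExp hm', hintB]
  -- ∫ b·B = S
  have hbBpull : ∫ ω, b ω * B ω ∂μ = S := by
    have h1 : condExp (MeasurableSpace.comap Z inferInstance) μ (fun ω => b ω * B ω)
        =ᵐ[μ] fun ω => b ω * b ω := by
      have hbsm' : StronglyMeasurable[MeasurableSpace.comap Z inferInstance] b :=
        hb ▸ stronglyMeasurable_condExp
      have h2 := condExp_mul_of_stronglyMeasurable_left (μ := μ) hbsm' hbBint hBint
      have h3 : b * condExp (MeasurableSpace.comap Z inferInstance) μ B
          = fun ω => b ω * b ω := by rw [← hb]; rfl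
      exact h3 ▸ h2
    calc ∫ ω, b ω * B ω ∂μ
        = ∫ ω, condExp (MeasurableSpace.comap Z inferInstance) μ (fun ω => b ω * B ω) ω ∂μ :=
          (integral_condExp hm').symm
      _ = S := by rw [integral_congr_ae h1]
  -- ∫_{s1} b = S
  have hS1 : ∫ ω in s1, b ω ∂μ = S := by
    rw [← hbBpull, hsplit (fun ω => b ω * B ω) hbBint,
      setIntegral_congr_fun (f := fun ω => b ω * B ω) (g := fun ω => b ω) hs1
        (fun ω hω => by show b ω * B ω = b ω; rw [show B ω = 1 from hω, mul_one]),
      setIntegral_congr_fun (f := fun ω => b ω * B ω) (g := fun _ => (0:ℝ)) hs0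
        (fun ω hω => by show b ω * B ω = 0; rw [show B ω = 0 from hω, mul_zero])]
    simp
  have hS0 : ∫ ω in s0, b ω ∂μ = p - S := by
    have := hsplit b hbint
    rw [hintb, hS1] at this
    linarith
  have hg3v1 : g3 ω1 * p = S := by
    rw [← hsconst1 g3 hg3m, hg3def, setIntegral_condExp hm hbint hs1m, hS1]
  have hg3v0 : g3 ω0 * q = p - S := by
    rw [← hsconst0 g3 hg3m, hg3def, setIntegral_condExp hm hbint hs0m, hS0]
  -- integrals of condexps
  have hintg1 : ∫ ω, g1 ω ∂μ = ∫ ω, f ω * b ω ∂μ := by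
    rw [hg1def]; exact integral_condExp hm
  have hg2bd : ∀ᵐ ω ∂μ, |g2 ω| ≤ Cf := by
    rw [hg2def]
    have := ae_bdd_condExp_of_ae_bdd (m := MeasurableSpace.comap B inferInstance)
      (μ := μ) (f := f) (R := ⟨Cf, hCf0⟩) (ae_of_all _ fun ω => hfbdd ω)
    exact this
  have hg3bd : ∀ᵐ ω ∂μ, |g3 ω| ≤ 1 := by
    rw [hg3def]
    have := ae_bdd_condExp_of_ae_bdd (m := MeasurableSpace.comap B inferInstance)
      (μ := μ) (f := b) (R := 1) (by simpa using hbbd)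
    simpa using this
  have hg23int : Integrable (fun ω => g2 ω * g3 ω) μ := by
    refine Integrable.mono' (integrable_const Cf)
      (((stronglyMeasurable_condExp.mono hm).mul
        (stronglyMeasurable_condExp.mono hm)).aestronglyMeasurable) ?_
    filter_upwards [hg2bd, hg3bd] with ω h2 h3
    have := mul_le_mul h2 h3 (abs_nonneg _) hCf0
    simpa [abs_mul] using this
  have hintg23 : ∫ ω, g2 ω * g3 ω ∂μ = (g2 ω1 * g3 ω1) * p + (g2 ω0 * g3 ω0) * q := by
    rw [hsplit _ hg23int, hsconst1 (fun ω => g2 ω * g3 ω) (hg2m.mul hg3m), hsconst0 (fun ω => g2 ω * g3 ω) (hg2m.mul hg3m)]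
  have hEf : ∫ ω, f ω ∂μ = F1 + F0 := hsplit f hfint
  -- put everything together
  have hgoal_int : ∫ ω, (g1 ω - g2 ω * g3 ω) ∂μ
      = (∫ ω, f ω * b ω ∂μ) - ((g2 ω1 * g3 ω1) * p + (g2 ω0 * g3 ω0) * q) := by
    rw [integral_sub (hg1def ▸ integrable_condExp) hg23int, hintg1, hintg23]
  rw [hDL, hD, hVarb]
  rw [hgoal_int, hEf, hintb]
  have hppos : 0 < p := h0
  have hV : S - p ^ 2 ≠ 0 := by rw [hVarb, hintb] at hVarbpos; linarith
  have e21 : g2 ω1 = F1 / p := by field_simp; linarith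
  have e20 : g2 ω0 = F0 / q := by field_simp; linarith
  have e31 : g3 ω1 = S / p := by field_simp; linarith
  have e30 : g3 ω0 = (p - S) / q := by field_simp; linarith
  rw [e21, e20, e31, e30, hq]
  have hq1 : (1:ℝ) - p ≠ 0 := by linarith
  field_simp
  ring
end

section
/- Under the setup where B is Bernoulli with 0 < P(B=1) < 1, b = E[B|Z] with Var(b) > 0, and f bounded: if both E[Cov(f, b | B)] ≥ 0 and E[Cov(f, B | b)] ≥ 0, then D^P ≤ D ≤ D^L, where D = E[f|B=1] − E[f|B=0], D^P = Cov(f,b)/(E[b](1−E[b])), and D^L = Cov(f,b)/Var(b). -/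
open MeasureTheory

/-- Main bound: if `E[Cov(f, b | B)] ≥ 0` and `E[Cov(f, B | b)] ≥ 0`,
then `D^P ≤ D ≤ D^L`. -/
theorem stmt_7 {Ω : Type*} [MeasurableSpace Ω] (μ : Measure Ω) [IsProbabilityMeasure μ]
    (B Z f : Ω → ℝ) (hB : Measurable B) (hZ : Measurable Z) (hf : Measurable f)
    (hBval : ∀ ω, B ω = 0 ∨ B ω = 1)
    (Cf : ℝ) (hfbdd : ∀ ω, |f ω| ≤ Cf)
    (h0 : 0 < (μ {ω | B ω = 1}).toReal) (h1 : (μ {ω | B ω = 1}).toReal < 1)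
    (b : Ω → ℝ) (hb : b = condExp (MeasurableSpace.comap Z inferInstance) μ B)
    (hVarb : 0 < (∫ ω, b ω * b ω ∂μ) - (∫ ω, b ω ∂μ) ^ 2)
    (hcov1 : 0 ≤ ∫ ω,
        (condExp (MeasurableSpace.comap B inferInstance) μ (fun ω' => f ω' * b ω') ω
          - condExp (MeasurableSpace.comap B inferInstance) μ f ω
            * condExp (MeasurableSpace.comap B inferInstance) μ b ω) ∂μ)
    (hcov2 : 0 ≤ ∫ ω,
        (condExp (MeasurableSpace.comap b inferInstance) μ (fun ω' => f ω' * B ω') ω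
          - condExp (MeasurableSpace.comap b inferInstance) μ f ω
            * condExp (MeasurableSpace.comap b inferInstance) μ B ω) ∂μ)
    (D DP DL : ℝ)
    (hD : D = (∫ ω in {ω | B ω = 1}, f ω ∂μ) / (μ {ω | B ω = 1}).toReal
        - (∫ ω in {ω | B ω = 0}, f ω ∂μ) / (μ {ω | B ω = 0}).toReal)
    (hDP : DP = ((∫ ω, f ω * b ω ∂μ) - (∫ ω, f ω ∂μ) * (∫ ω, b ω ∂μ))
        / ((∫ ω, b ω ∂μ) * (1 - ∫ ω, b ω ∂μ)))
    (hDL : DL = ((∫ ω, f ω * b ω ∂μ) - (∫ ω, f ω ∂μ) * (∫ ω, b ω ∂μ))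
        / ((∫ ω, b ω * b ω ∂μ) - (∫ ω, b ω ∂μ) ^ 2)) :
    DP ≤ D ∧ D ≤ DL := by
  classical
  have hmZle : MeasurableSpace.comap Z inferInstance ≤ ‹MeasurableSpace Ω› := hZ.comap_le
  have hmBle : MeasurableSpace.comap B inferInstance ≤ ‹MeasurableSpace Ω› := hB.comap_le
  have hbsmZ : StronglyMeasurable[MeasurableSpace.comap Z inferInstance] b :=
    hb ▸ stronglyMeasurable_condExp
  have hbm : Measurable b := (hbsmZ.mono hmZle).measurable
  have hmble : MeasurableSpace.comap b inferInstance ≤ ‹MeasurableSpace Ω› := hbm.comap_le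
  have S1m : MeasurableSet {ω | B ω = 1} := hB (measurableSet_singleton 1)
  have S0m : MeasurableSet {ω | B ω = 0} := hB (measurableSet_singleton 0)
  have hS0c : {ω | B ω = 0} = {ω | B ω = 1}ᶜ := by
    ext ω; rcases hBval ω with h | h <;> simp [h]
  -- measure of S0
  have hpq : (μ {ω | B ω = 0}).toReal = 1 - (μ {ω | B ω = 1}).toReal := by
    rw [hS0c, measure_compl S1m (measure_ne_top μ _), measure_univ,
      ENNReal.toReal_sub_of_le prob_le_one ENNReal.one_ne_top, ENNReal.toReal_one]
  have hp0' : (μ {ω | B ω = 1}).toReal ≠ 0 := ne_of_gt h0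
  have hq0' : (μ {ω | B ω = 0}).toReal ≠ 0 := by rw [hpq]; intro h; linarith
  -- integrability
  have hfint : Integrable f μ :=
    (integrable_const Cf).mono' hf.aestronglyMeasurable
      (Filter.Eventually.of_forall fun ω => by simpa using hfbdd ω)
  have hBb : ∀ ω, ‖B ω‖ ≤ 1 := fun ω => by rcases hBval ω with h | h <;> simp [h]
  have hBint : Integrable B μ :=
    (integrable_const 1).mono' hB.aestronglyMeasurable (Filter.Eventually.of_forall hBb)
  have hbint : Integrable b μ := hb ▸ integrable_condExp
  have hfb : Integrable (fun ω => f ω * b ω) μ :=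
    hbint.bdd_mul (c := Cf) hf.aestronglyMeasurable (Filter.Eventually.of_forall fun ω => by simpa using hfbdd ω)
  have hbf : Integrable (fun ω => b ω * f ω) μ :=
    hfb.congr (Filter.Eventually.of_forall fun ω => mul_comm _ _)
  have hfB : Integrable (fun ω => f ω * B ω) μ :=
    hBint.bdd_mul (c := Cf) hf.aestronglyMeasurable (Filter.Eventually.of_forall fun ω => by simpa using hfbdd ω)
  have hbB : Integrable (fun ω => b ω * B ω) μ :=
    (hbint.bdd_mul (c := 1) hB.aestronglyMeasurable (Filter.Eventually.of_forall hBb)).congr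
      (Filter.Eventually.of_forall fun ω => mul_comm _ _)
  -- basic integrals
  have hIB : ∫ ω, B ω ∂μ = (μ {ω | B ω = 1}).toReal := by
    have e : ∫ ω, B ω ∂μ = ∫ ω, Set.indicator {ω | B ω = 1} (fun _ => (1 : ℝ)) ω ∂μ :=
      integral_congr_ae (Filter.Eventually.of_forall fun ω => by
        rcases hBval ω with h | h <;> simp [Set.indicator_apply, h])
    rw [e, integral_indicator S1m]; simp; rfl
  have hIfB : ∫ ω, f ω * B ω ∂μ = ∫ ω in {ω | B ω = 1}, f ω ∂μ := by
    have e : ∫ ω, f ω * B ω ∂μ = ∫ ω, Set.indicator {ω | B ω = 1} f ω ∂μ :=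
      integral_congr_ae (Filter.Eventually.of_forall fun ω => by
        rcases hBval ω with h | h <;> simp [Set.indicator_apply, h])
    rw [e, integral_indicator S1m]
  have hIbB : ∫ ω, b ω * B ω ∂μ = ∫ ω in {ω | B ω = 1}, b ω ∂μ := by
    have e : ∫ ω, b ω * B ω ∂μ = ∫ ω, Set.indicator {ω | B ω = 1} b ω ∂μ :=
      integral_congr_ae (Filter.Eventually.of_forall fun ω => by
        rcases hBval ω with h | h <;> simp [Set.indicator_apply, h])
    rw [e, integral_indicator S1m]
  have hIb : ∫ ω, b ω ∂μ = (μ {ω | B ω = 1}).toReal := by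
    rw [hb, integral_condExp hmZle]; exact hIB
  -- ∫ b*B = ∫ b*b
  have hpull0 : condExp (MeasurableSpace.comap Z inferInstance) μ (fun ω => b ω * B ω)
      =ᵐ[μ] fun ω => b ω * b ω := by
    have h := condExp_mul_of_stronglyMeasurable_left (m := MeasurableSpace.comap Z inferInstance)
      hbsmZ (show Integrable (b * B) μ from hbB) hBint
    rw [← hb] at h
    exact h.trans (Filter.Eventually.of_forall fun ω => rfl)
  have hIb2 : ∫ ω in {ω | B ω = 1}, b ω ∂μ = ∫ ω, b ω * b ω ∂μ := by
    rw [← hIbB, ← integral_condExp (f := fun ω => b ω * B ω) hmZle]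
    exact integral_congr_ae hpull0
  -- splitting integrals over S1 and S0
  have hsplit : ∀ u : Ω → ℝ, Integrable u μ →
      (∫ ω in {ω | B ω = 1}, u ω ∂μ) + (∫ ω in {ω | B ω = 0}, u ω ∂μ) = ∫ ω, u ω ∂μ := by
    intro u hu
    rw [hS0c]
    exact integral_add_compl S1m hu
  -- explicit form of condExp with respect to σ(B)
  have condExpB : ∀ u : Ω → ℝ, Integrable u μ →
      condExp (MeasurableSpace.comap B inferInstance) μ u =ᵐ[μ]
        fun ω => (∫ ω in {ω | B ω = 0}, u ω ∂μ) / (μ {ω | B ω = 0}).toReal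
          + ((∫ ω in {ω | B ω = 1}, u ω ∂μ) / (μ {ω | B ω = 1}).toReal
             - (∫ ω in {ω | B ω = 0}, u ω ∂μ) / (μ {ω | B ω = 0}).toReal) * B ω := by
    intro u hu
    set c0 := (∫ ω in {ω | B ω = 0}, u ω ∂μ) / (μ {ω | B ω = 0}).toReal with hc0
    set c1 := (∫ ω in {ω | B ω = 1}, u ω ∂μ) / (μ {ω | B ω = 1}).toReal with hc1
    have hgint : Integrable (fun ω => c0 + (c1 - c0) * B ω) μ :=
      (integrable_const c0).add (hBint.const_mul (c1 - c0))
    have hgS1 : ∫ ω in {ω | B ω = 1}, (c0 + (c1 - c0) * B ω) ∂μ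
        = ∫ ω in {ω | B ω = 1}, u ω ∂μ := by
      rw [setIntegral_congr_fun (g := fun _ => c1) S1m
        (fun ω hω => by simp only [Set.mem_setOf_eq] at hω; rw [hω]; ring)]
      rw [setIntegral_const, smul_eq_mul, hc1, Measure.real, mul_comm, div_mul_cancel₀ _ hp0']
    have hgS0 : ∫ ω in {ω | B ω = 0}, (c0 + (c1 - c0) * B ω) ∂μ
        = ∫ ω in {ω | B ω = 0}, u ω ∂μ := by
      rw [setIntegral_congr_fun (g := fun _ => c0) S0m
        (fun ω hω => by simp only [Set.mem_setOf_eq] at hω; rw [hω]; ring)]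
      rw [setIntegral_const, smul_eq_mul, hc0, Measure.real, mul_comm, div_mul_cancel₀ _ hq0']
    have hgtot : ∫ ω, (c0 + (c1 - c0) * B ω) ∂μ = ∫ ω, u ω ∂μ := by
      rw [← hsplit u hu, ← hsplit _ hgint, hgS1, hgS0]
    refine (ae_eq_condExp_of_forall_setIntegral_eq hmBle hu
      (fun s _ _ => hgint.integrableOn) ?_ ?_).symm
    · intro s hs _
      obtain ⟨t, htm, rfl⟩ := hs
      by_cases h0t : (0 : ℝ) ∈ t <;> by_cases h1t : (1 : ℝ) ∈ t
      · have hset : B ⁻¹' t = Set.univ := by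
          ext ω; rcases hBval ω with h | h <;> simp [h, h0t, h1t]
        rw [hset, setIntegral_univ, setIntegral_univ]; exact hgtot
      · have hset : B ⁻¹' t = {ω | B ω = 0} := by
          ext ω; rcases hBval ω with h | h <;> simp [h, h0t, h1t]
        rw [hset]; exact hgS0
      · have hset : B ⁻¹' t = {ω | B ω = 1} := by
          ext ω; rcases hBval ω with h | h <;> simp [h, h0t, h1t]
        rw [hset]; exact hgS1
      · have hset : B ⁻¹' t = ∅ := by
          ext ω; rcases hBval ω with h | h <;> simp [h, h0t, h1t]
        rw [hset]; simp
    · have hBc : Measurable[MeasurableSpace.comap B inferInstance] B :=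
        Measurable.of_comap_le le_rfl
      exact (((hBc.const_mul (c1 - c0)).const_add c0).stronglyMeasurable).aestronglyMeasurable
  -- conditional expectation of B given σ(b) is b
  have hmb_le_mZ : MeasurableSpace.comap b inferInstance
      ≤ MeasurableSpace.comap Z inferInstance := hbsmZ.measurable.comap_le
  have hbsmb : StronglyMeasurable[MeasurableSpace.comap b inferInstance] b :=
    (Measurable.of_comap_le le_rfl).stronglyMeasurable
  have hEBb : condExp (MeasurableSpace.comap b inferInstance) μ B =ᵐ[μ] b := by
    have h2 := condExp_condExp_of_le (μ := μ) (f := B) hmb_le_mZ hmZle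
    have h3 : condExp (MeasurableSpace.comap b inferInstance) μ b = b :=
      condExp_of_stronglyMeasurable hmble hbsmb hbint
    rw [← hb] at h2
    refine h2.symm.trans ?_
    rw [h3]
  -- reduce hcov2
  have hpull2 : condExp (MeasurableSpace.comap b inferInstance) μ (fun ω => b ω * f ω)
      =ᵐ[μ] fun ω => b ω * condExp (MeasurableSpace.comap b inferInstance) μ f ω := by
    have h := condExp_mul_of_stronglyMeasurable_left (m := MeasurableSpace.comap b inferInstance)
      hbsmb (show Integrable (b * f) μ from hbf) hfint
    exact h.trans (Filter.Eventually.of_forall fun ω => rfl)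
  have e1 : (fun ω => condExp (MeasurableSpace.comap b inferInstance) μ f ω
        * condExp (MeasurableSpace.comap b inferInstance) μ B ω)
      =ᵐ[μ] fun ω => b ω * condExp (MeasurableSpace.comap b inferInstance) μ f ω := by
    filter_upwards [hEBb] with ω hω
    rw [hω]; ring
  have intY2 : Integrable (fun ω => condExp (MeasurableSpace.comap b inferInstance) μ f ω
      * condExp (MeasurableSpace.comap b inferInstance) μ B ω) μ :=
    (integrable_condExp.congr hpull2).congr e1.symm
  have h2a : ∫ ω, condExp (MeasurableSpace.comap b inferInstance) μ (fun ω' => f ω' * B ω') ω ∂μ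
      = ∫ ω in {ω | B ω = 1}, f ω ∂μ := by
    rw [integral_condExp hmble]; exact hIfB
  have h2b : ∫ ω, condExp (MeasurableSpace.comap b inferInstance) μ f ω
      * condExp (MeasurableSpace.comap b inferInstance) μ B ω ∂μ = ∫ ω, f ω * b ω ∂μ := by
    rw [integral_congr_ae e1, integral_congr_ae hpull2.symm, integral_condExp hmble]
    exact integral_congr_ae (Filter.Eventually.of_forall fun ω => mul_comm _ _)
  have hcov2' : 0 ≤ (∫ ω in {ω | B ω = 1}, f ω ∂μ) - ∫ ω, f ω * b ω ∂μ := by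
    have hsub : (∫ ω,
        (condExp (MeasurableSpace.comap b inferInstance) μ (fun ω' => f ω' * B ω') ω
          - condExp (MeasurableSpace.comap b inferInstance) μ f ω
            * condExp (MeasurableSpace.comap b inferInstance) μ B ω) ∂μ)
        = (∫ ω, condExp (MeasurableSpace.comap b inferInstance) μ (fun ω' => f ω' * B ω') ω ∂μ)
          - ∫ ω, condExp (MeasurableSpace.comap b inferInstance) μ f ω
              * condExp (MeasurableSpace.comap b inferInstance) μ B ω ∂μ :=
      integral_sub integrable_condExp intY2
    rw [hsub, h2a, h2b] at hcov2
    exact hcov2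
  -- reduce hcov1
  set F0 := ∫ ω in {ω | B ω = 0}, f ω ∂μ with hF0
  set F1 := ∫ ω in {ω | B ω = 1}, f ω ∂μ with hF1
  set G0 := ∫ ω in {ω | B ω = 0}, b ω ∂μ with hG0
  set G1 := ∫ ω in {ω | B ω = 1}, b ω ∂μ with hG1
  set p := (μ {ω | B ω = 1}).toReal with hp
  set q := (μ {ω | B ω = 0}).toReal with hqd
  have e3 : (fun ω => condExp (MeasurableSpace.comap B inferInstance) μ f ω
        * condExp (MeasurableSpace.comap B inferInstance) μ b ω)
      =ᵐ[μ] fun ω => (F0 / q) * (G0 / q) + ((F1 / p) * (G1 / p) - (F0 / q) * (G0 / q)) * B ω := by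
    filter_upwards [condExpB f hfint, condExpB b hbint] with ω h1' h2'
    rw [h1', h2']
    rcases hBval ω with h | h <;> rw [h] <;> ring
  have hintY1 : Integrable
      (fun ω => (F0 / q) * (G0 / q) + ((F1 / p) * (G1 / p) - (F0 / q) * (G0 / q)) * B ω) μ :=
    (integrable_const _).add (hBint.const_mul _)
  have intY1 : Integrable (fun ω => condExp (MeasurableSpace.comap B inferInstance) μ f ω
      * condExp (MeasurableSpace.comap B inferInstance) μ b ω) μ := hintY1.congr e3.symm
  have hIY1 : ∫ ω, ((F0 / q) * (G0 / q)
        + ((F1 / p) * (G1 / p) - (F0 / q) * (G0 / q)) * B ω) ∂μ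
      = (F0 / q) * (G0 / q) + ((F1 / p) * (G1 / p) - (F0 / q) * (G0 / q)) * p := by
    rw [integral_add (integrable_const _) (hBint.const_mul _), integral_const,
      integral_const_mul, hIB]
    simp
  have hcov1' : 0 ≤ (∫ ω, f ω * b ω ∂μ)
      - ((F0 / q) * (G0 / q) + ((F1 / p) * (G1 / p) - (F0 / q) * (G0 / q)) * p) := by
    have hsub : (∫ ω,
        (condExp (MeasurableSpace.comap B inferInstance) μ (fun ω' => f ω' * b ω') ω
          - condExp (MeasurableSpace.comap B inferInstance) μ f ω
            * condExp (MeasurableSpace.comap B inferInstance) μ b ω) ∂μ)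
        = (∫ ω, condExp (MeasurableSpace.comap B inferInstance) μ (fun ω' => f ω' * b ω') ω ∂μ)
          - ∫ ω, condExp (MeasurableSpace.comap B inferInstance) μ f ω
              * condExp (MeasurableSpace.comap B inferInstance) μ b ω ∂μ :=
      integral_sub integrable_condExp intY1
    rw [hsub, integral_condExp hmBle, integral_congr_ae e3, hIY1] at hcov1
    exact hcov1
  -- final algebra
  set Ifb := ∫ ω, f ω * b ω ∂μ with hIfb
  set If := ∫ ω, f ω ∂μ with hIf
  set Ib2 := ∫ ω, b ω * b ω ∂μ with hIb2d
  have hfs : F1 + F0 = If := hsplit f hfint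
  have hbs : G1 + G0 = p := by rw [hsplit b hbint]; exact hIb
  have hG1' : G1 = Ib2 := hIb2
  have hG0' : G0 = p - Ib2 := by rw [← hbs, hG1']; ring
  have hq1 : q = 1 - p := hpq
  have hVar : 0 < Ib2 - p ^ 2 := by rwa [hIb] at hVarb
  rw [hD, hDP, hDL, hIb]
  clear_value F0 F1 G0 G1 p q Ifb If Ib2
  have hq0 : 0 < q := by rw [hq1]; linarith
  have hDeq : F1 / p - F0 / q = (F1 - If * p) / (p * q) := by
    rw [← hfs, hq1]
    have h1p : (1 : ℝ) - p ≠ 0 := by linarith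
    field_simp
    ring
  have hpq0 : 0 < p * q := mul_pos h0 hq0
  constructor
  · rw [hDeq, ← hq1, div_le_div_iff₀ hpq0 hpq0]
    have h2'' : Ifb ≤ F1 := by linarith
    have := mul_le_mul_of_nonneg_right (show Ifb - If * p ≤ F1 - If * p by linarith)
      (le_of_lt hpq0)
    linarith
  · rw [hDeq, div_le_div_iff₀ hpq0 hVar]
    have key : (F0 / q) * (G0 / q) + ((F1 / p) * (G1 / p) - (F0 / q) * (G0 / q)) * p
        = If * p + (Ib2 - p ^ 2) * ((F1 - If * p) / (p * q)) := by
      rw [hG1', hG0', ← hfs, hq1]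
      have h1p : (1 : ℝ) - p ≠ 0 := by linarith
      field_simp
      ring
    have h6 : (Ib2 - p ^ 2) * ((F1 - If * p) / (p * q)) ≤ Ifb - If * p := by
      linarith [hcov1', key]
    have h7 := mul_le_mul_of_nonneg_right h6 (le_of_lt hpq0)
    have h8 : (Ib2 - p ^ 2) * ((F1 - If * p) / (p * q)) * (p * q)
        = (F1 - If * p) * (Ib2 - p ^ 2) := by
      field_simp
    linarith [h7, h8]
end

section
/- Let B be Bernoulli, b = E[B|Z] calibrated, f bounded, with Var(B) > 0 and Var(b) > 0. If E[Cov(f, b | B)] ≥ 0 and E[Cov(f, B | b)] ≥ 0 and additionally D^L ≤ α for some α ≥ 0, then the true disparity satisfies D ≤ α. Symmetrically, if both expected conditional covariances are ≤ 0 and D^L ≥ −α, then D ≥ −α. -/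
open MeasureTheory

lemma binary_piecewise_integrable {Ω : Type*} [MeasurableSpace Ω] (μ : Measure Ω)
    [IsFiniteMeasure μ] (B : Ω → ℝ) (hB : Measurable B) (c d : ℝ) :
    Integrable (fun ω => if B ω = 1 then c else d) μ := by
  have hmeas : Measurable fun ω => if B ω = 1 then c else d :=
    Measurable.ite (hB (measurableSet_singleton 1)) measurable_const measurable_const
  refine Integrable.mono' (integrable_const (|c| + |d|)) hmeas.aestronglyMeasurable
    (Filter.Eventually.of_forall fun ω => ?_)
  by_cases h : B ω = 1
  · simp only [h, if_true, Real.norm_eq_abs]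
    exact le_add_of_nonneg_right (abs_nonneg _)
  · simp only [h, if_false, Real.norm_eq_abs]
    exact le_add_of_nonneg_left (abs_nonneg _)

lemma binary_piecewise_integral {Ω : Type*} [MeasurableSpace Ω] (μ : Measure Ω)
    [IsProbabilityMeasure μ] (B : Ω → ℝ) (hB : Measurable B) (hBval : ∀ ω, B ω = 0 ∨ B ω = 1)
    (c d : ℝ) :
    ∫ ω, (if B ω = 1 then c else d) ∂μ
      = c * (μ {ω | B ω = 1}).toReal + d * (μ {ω | B ω = 0}).toReal := by
  have hS1 : MeasurableSet {ω | B ω = 1} := hB (measurableSet_singleton 1)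
  have hS0c : {ω | B ω = 0} = {ω | B ω = 1}ᶜ := by
    ext ω; rcases hBval ω with h | h <;> simp [h]
  have hint := binary_piecewise_integrable μ B hB c d
  rw [← integral_add_compl hS1 hint, ← hS0c]
  have e1 : ∫ ω in {ω | B ω = 1}, (if B ω = 1 then c else d) ∂μ
      = c * (μ {ω | B ω = 1}).toReal := by
    have h1 : ∀ x ∈ {ω | B ω = 1}, (if B x = 1 then c else d) = c := by
      intro x hx
      have hx1 : B x = 1 := hx
      simp [hx1]
    rw [setIntegral_congr_fun hS1 h1, setIntegral_const, smul_eq_mul, measureReal_def, mul_comm]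
  have e0 : ∫ ω in {ω | B ω = 0}, (if B ω = 1 then c else d) ∂μ
      = d * (μ {ω | B ω = 0}).toReal := by
    have hS0 : MeasurableSet {ω | B ω = 0} := hB (measurableSet_singleton 0)
    have : ∀ x ∈ {ω | B ω = 0}, (if B x = 1 then c else d) = d := by
      intro x hx
      have hx0 : B x = 0 := hx
      simp [hx0]
    rw [setIntegral_congr_fun hS0 this, setIntegral_const, smul_eq_mul, measureReal_def, mul_comm]
  rw [e1, e0]
lemma binary_condexp {Ω : Type*} [MeasurableSpace Ω] (μ : Measure Ω) [IsProbabilityMeasure μ]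
    (B : Ω → ℝ) (hB : Measurable B) (hBval : ∀ ω, B ω = 0 ∨ B ω = 1)
    (hp : (μ {ω | B ω = 1}).toReal ≠ 0) (hq : (μ {ω | B ω = 0}).toReal ≠ 0)
    (g : Ω → ℝ) (hg : Integrable g μ) :
    (fun ω => if B ω = 1 then (∫ x in {ω | B ω = 1}, g x ∂μ) / (μ {ω | B ω = 1}).toReal
      else (∫ x in {ω | B ω = 0}, g x ∂μ) / (μ {ω | B ω = 0}).toReal)
    =ᵐ[μ] condExp (MeasurableSpace.comap B inferInstance) μ g := by
  classical
  set S1 : Set Ω := {ω | B ω = 1} with hS1def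
  set S0 : Set Ω := {ω | B ω = 0} with hS0def
  have hS1 : MeasurableSet S1 := hB (measurableSet_singleton 1)
  have hS0 : MeasurableSet S0 := hB (measurableSet_singleton 0)
  have hS0c : S0 = S1ᶜ := by
    ext ω; rcases hBval ω with h | h <;> simp [hS0def, hS1def, h]
  set a1 : ℝ := (∫ x in S1, g x ∂μ) / (μ S1).toReal with ha1
  set a0 : ℝ := (∫ x in S0, g x ∂μ) / (μ S0).toReal with ha0
  set G : Ω → ℝ := fun ω => if B ω = 1 then a1 else a0 with hG
  have hGmeas : Measurable[MeasurableSpace.comap B inferInstance] G := by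
    have hBm : Measurable[MeasurableSpace.comap B inferInstance] B :=
      Measurable.of_comap_le le_rfl
    have h1 : Measurable (fun x : ℝ => if x = 1 then a1 else a0) :=
      Measurable.ite (measurableSet_singleton 1) measurable_const measurable_const
    exact h1.comp hBm
  have hGmeas' : Measurable G := (hGmeas.mono hB.comap_le le_rfl)
  have hGbdd : ∀ ω, ‖G ω‖ ≤ |a1| + |a0| := by
    intro ω
    by_cases h : B ω = 1
    · simp only [hG, h, if_true, Real.norm_eq_abs]
      exact le_add_of_nonneg_right (abs_nonneg _)
    · simp only [hG, h, if_false, Real.norm_eq_abs]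
      exact le_add_of_nonneg_left (abs_nonneg _)
  have hGint : Integrable G μ :=
    Integrable.mono' (integrable_const (|a1| + |a0|)) hGmeas'.aestronglyMeasurable
      (Filter.Eventually.of_forall hGbdd)
  have hint1 : ∫ x in S1, G x ∂μ = ∫ x in S1, g x ∂μ := by
    have : ∀ x ∈ S1, G x = a1 := fun x hx => by simp [hG, hS1def] at hx ⊢; simp [hx]
    rw [setIntegral_congr_fun hS1 this, setIntegral_const, smul_eq_mul, ha1, measureReal_def]
    field_simp
  have hint0 : ∫ x in S0, G x ∂μ = ∫ x in S0, g x ∂μ := by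
    have : ∀ x ∈ S0, G x = a0 := by
      intro x hx
      have hx0 : B x = 0 := hx
      simp [hG, hx0]
    rw [setIntegral_congr_fun hS0 this, setIntegral_const, smul_eq_mul, ha0, measureReal_def]
    field_simp
  have hm : MeasurableSpace.comap B inferInstance ≤ _ := hB.comap_le
  refine ae_eq_condExp_of_forall_setIntegral_eq hm hg
    (fun s _ _ => hGint.integrableOn) ?_
    (StronglyMeasurable.aestronglyMeasurable hGmeas.stronglyMeasurable)
  rintro s ⟨t, ht, rfl⟩ _
  by_cases h1t : (1:ℝ) ∈ t <;> by_cases h0t : (0:ℝ) ∈ t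
  · have huniv : B ⁻¹' t = Set.univ := by
      ext ω; rcases hBval ω with h | h <;> simp [h, h0t, h1t]
    rw [huniv]
    simp only [Measure.restrict_univ]
    have e1 := integral_add_compl hS1 hGint
    have e2 := integral_add_compl hS1 hg
    rw [← hS0c] at e1 e2
    rw [← e1, ← e2, hint1, hint0]
  · have heq : B ⁻¹' t = S1 := by
      ext ω; rcases hBval ω with h | h <;> simp [hS1def, h, h0t, h1t]
    rw [heq]; exact hint1
  · have heq : B ⁻¹' t = S0 := by
      ext ω; rcases hBval ω with h | h <;> simp [hS0def, h, h0t, h1t]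
    rw [heq]; exact hint0
  · have heq : B ⁻¹' t = ∅ := by
      ext ω; rcases hBval ω with h | h <;> simp [h, h0t, h1t]
    rw [heq]; simp

/-- Surrogate-constraint guarantee: under the covariance sign conditions, bounding the
linear estimator `D^L` by `α` bounds the true disparity `D` by `α` (and symmetrically). -/
theorem stmt_10 {Ω : Type*} [MeasurableSpace Ω] (μ : Measure Ω) [IsProbabilityMeasure μ]
    (B Z f : Ω → ℝ) (hB : Measurable B) (hZ : Measurable Z) (hf : Measurable f)
    (hBval : ∀ ω, B ω = 0 ∨ B ω = 1)
    (Cf : ℝ) (hfbdd : ∀ ω, |f ω| ≤ Cf)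
    (h0 : 0 < (μ {ω | B ω = 1}).toReal) (h1 : (μ {ω | B ω = 1}).toReal < 1)
    (b : Ω → ℝ) (hb : b = condExp (MeasurableSpace.comap Z inferInstance) μ B)
    (hVarB : 0 < (∫ ω, B ω * B ω ∂μ) - (∫ ω, B ω ∂μ) ^ 2)
    (hVarb : 0 < (∫ ω, b ω * b ω ∂μ) - (∫ ω, b ω ∂μ) ^ 2)
    (CovbB CovBb : ℝ)
    (hCovbB : CovbB = ∫ ω,
        (condExp (MeasurableSpace.comap B inferInstance) μ (fun ω' => f ω' * b ω') ω
          - condExp (MeasurableSpace.comap B inferInstance) μ f ω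
            * condExp (MeasurableSpace.comap B inferInstance) μ b ω) ∂μ)
    (hCovBb : CovBb = ∫ ω,
        (condExp (MeasurableSpace.comap b inferInstance) μ (fun ω' => f ω' * B ω') ω
          - condExp (MeasurableSpace.comap b inferInstance) μ f ω
            * condExp (MeasurableSpace.comap b inferInstance) μ B ω) ∂μ)
    (D DL : ℝ)
    (hD : D = (∫ ω in {ω | B ω = 1}, f ω ∂μ) / (μ {ω | B ω = 1}).toReal
        - (∫ ω in {ω | B ω = 0}, f ω ∂μ) / (μ {ω | B ω = 0}).toReal)
    (hDL : DL = ((∫ ω, f ω * b ω ∂μ) - (∫ ω, f ω ∂μ) * (∫ ω, b ω ∂μ))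
        / ((∫ ω, b ω * b ω ∂μ) - (∫ ω, b ω ∂μ) ^ 2))
    (α : ℝ) (hα : 0 ≤ α) :
    (0 ≤ CovbB → 0 ≤ CovBb → DL ≤ α → D ≤ α) ∧
    (CovbB ≤ 0 → CovBb ≤ 0 → -α ≤ DL → -α ≤ D) := by
  classical
  have hS1 : MeasurableSet {ω | B ω = 1} := hB (measurableSet_singleton 1)
  have hS0 : MeasurableSet {ω | B ω = 0} := hB (measurableSet_singleton 0)
  have hS0c : {ω | B ω = 0} = {ω | B ω = 1}ᶜ := by
    ext ω; rcases hBval ω with h | h <;> simp [h]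
  set p : ℝ := (μ {ω | B ω = 1}).toReal with hp
  set q : ℝ := (μ {ω | B ω = 0}).toReal with hq
  -- p + q = 1
  have hpq : p + q = 1 := by
    have h := measure_add_measure_compl (μ := μ) hS1
    rw [← hS0c, measure_univ] at h
    have := congrArg ENNReal.toReal h
    rwa [ENNReal.toReal_add (measure_ne_top μ _) (measure_ne_top μ _), ENNReal.toReal_one] at this
  have hp0 : p ≠ 0 := ne_of_gt h0
  have hq0 : q ≠ 0 := by
    intro h; rw [h] at hpq; linarith
  have hqpos : 0 < q := by
    rcases lt_or_eq_of_le (ENNReal.toReal_nonneg : (0:ℝ) ≤ q) with h | h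
    · exact h
    · exact absurd h.symm hq0
  -- integrability
  have hfint : Integrable f μ :=
    Integrable.mono' (integrable_const Cf) hf.aestronglyMeasurable
      (Filter.Eventually.of_forall fun ω => by simpa [Real.norm_eq_abs] using hfbdd ω)
  have hBbdd : ∀ ω, ‖B ω‖ ≤ 1 := by
    intro ω; rcases hBval ω with h | h <;> simp [h]
  have hBint : Integrable B μ :=
    Integrable.mono' (integrable_const 1) hB.aestronglyMeasurable
      (Filter.Eventually.of_forall hBbdd)
  have hbint : Integrable b μ := hb ▸ integrable_condExp
  have hfb : Integrable (fun ω => f ω * b ω) μ :=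
    Integrable.bdd_mul hbint hf.aestronglyMeasurable
      (Filter.Eventually.of_forall fun x => by simpa [Real.norm_eq_abs] using hfbdd x)
  have hbB : Integrable (fun ω => b ω * B ω) μ :=
    (Integrable.bdd_mul hbint hB.aestronglyMeasurable (Filter.Eventually.of_forall hBbdd)).congr
      (Filter.Eventually.of_forall fun ω => mul_comm _ _)
  -- calibration: ∫ b * B = ∫ b * b
  have hmZ : MeasurableSpace.comap Z inferInstance ≤ _ := hZ.comap_le
  have hbm : StronglyMeasurable[MeasurableSpace.comap Z inferInstance] b :=
    hb ▸ stronglyMeasurable_condExp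
  have hcal : ∫ ω, b ω * B ω ∂μ = ∫ ω, b ω * b ω ∂μ := by
    have hpull := condExp_mul_of_stronglyMeasurable_left (μ := μ) hbm hbB hBint
    calc ∫ ω, b ω * B ω ∂μ
        = ∫ ω, condExp (MeasurableSpace.comap Z inferInstance) μ (b * B) ω ∂μ :=
          (integral_condExp hmZ).symm
      _ = ∫ ω, (b * condExp (MeasurableSpace.comap Z inferInstance) μ B) ω ∂μ :=
          integral_congr_ae hpull
      _ = ∫ ω, b ω * b ω ∂μ := by simp only [← hb, Pi.mul_apply]
  -- ∫ B = p, ∫ b = p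
  have hBind : B = Set.indicator {ω | B ω = 1} (fun _ => (1:ℝ)) := by
    funext ω; rcases hBval ω with h | h <;> simp [Set.indicator_apply, h]
  have hEB : ∫ ω, B ω ∂μ = p := by
    conv_lhs => rw [hBind]
    rw [integral_indicator hS1, setIntegral_const, smul_eq_mul, mul_one, measureReal_def]
  have hEb : ∫ ω, b ω ∂μ = p := by
    rw [hb, integral_condExp hmZ, hEB]
  -- ∫_{B=1} b = ∫ b*b
  have hI1b : ∫ x in {ω | B ω = 1}, b x ∂μ = ∫ ω, b ω * b ω ∂μ := by
    have hind : (fun ω => b ω * B ω) = Set.indicator {ω | B ω = 1} b := by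
      funext ω; rcases hBval ω with h | h <;> simp [Set.indicator_apply, h]
    rw [← hcal, hind, integral_indicator hS1]
  have hI0b : ∫ x in {ω | B ω = 0}, b x ∂μ = p - ∫ ω, b ω * b ω ∂μ := by
    have h := integral_add_compl hS1 hbint
    rw [← hS0c, hEb, hI1b] at h
    linarith
  -- ∫ f split
  have hEf_split : ∫ ω, f ω ∂μ
      = (∫ x in {ω | B ω = 1}, f x ∂μ) + ∫ x in {ω | B ω = 0}, f x ∂μ := by
    have h := integral_add_compl hS1 hfint
    rw [← hS0c] at h
    linarith
  -- condexp formulas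
  set If1 : ℝ := ∫ x in {ω | B ω = 1}, f x ∂μ with hIf1
  set If0 : ℝ := ∫ x in {ω | B ω = 0}, f x ∂μ with hIf0
  set Ibb : ℝ := ∫ ω, b ω * b ω ∂μ with hIbb
  set Ifb : ℝ := ∫ ω, f ω * b ω ∂μ with hIfb
  have hEfae := (binary_condexp μ B hB hBval hp0 hq0 f hfint).symm
  have hEbae := (binary_condexp μ B hB hBval hp0 hq0 b hbint).symm
  have hmB : MeasurableSpace.comap B inferInstance ≤ _ := hB.comap_le
  -- CovbB formula
  have hcov : CovbB = Ifb - ((If1/p) * (Ibb/p) * p + (If0/q) * ((p - Ibb)/q) * q) := by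
    rw [hCovbB]
    have h1 : (fun ω => condExp (MeasurableSpace.comap B inferInstance) μ
          (fun ω' => f ω' * b ω') ω
          - condExp (MeasurableSpace.comap B inferInstance) μ f ω
            * condExp (MeasurableSpace.comap B inferInstance) μ b ω) =ᵐ[μ]
        (fun ω => condExp (MeasurableSpace.comap B inferInstance) μ
          (fun ω' => f ω' * b ω') ω
          - (if B ω = 1 then (If1/p) * ((∫ x in {ω | B ω = 1}, b x ∂μ)/p)
              else (If0/q) * ((∫ x in {ω | B ω = 0}, b x ∂μ)/q))) := by
      filter_upwards [hEfae, hEbae] with ω hf1 hb1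
      rw [hf1, hb1]
      by_cases h : B ω = 1 <;> simp [h, hp, hq, hIf1, hIf0]
    rw [integral_congr_ae h1, integral_sub integrable_condExp
      (binary_piecewise_integrable μ B hB _ _), integral_condExp hmB,
      binary_piecewise_integral μ B hB hBval, hI1b, hI0b]
  -- key identity
  have hV : 0 < Ibb - p ^ 2 := by rw [hIbb]; rw [hEb] at hVarb; exact hVarb
  have hkey : DL = CovbB / (Ibb - p ^ 2) + D := by
    have hq1 : q = 1 - p := by linarith
    have hp1 : (1:ℝ) - p ≠ 0 := by linarith
    rw [hDL, hD, hEb, hEf_split, hcov, hq1]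
    field_simp
    ring
  constructor
  · intro hc _ hdl
    have hnn : 0 ≤ CovbB / (Ibb - p ^ 2) := div_nonneg hc hV.le
    linarith
  · intro hc _ hdl
    have hnp : CovbB / (Ibb - p ^ 2) ≤ 0 := div_nonpos_of_nonpos_of_nonneg hc hV.le
    linarith
end

section
/- Finite-sample identity: for a finite dataset {(f_i, b_i)}_{i=1}^n with b_i ∈ [0,1], sample mean b̄ ∈ (0,1), and sample variance s_b² := (1/n)Σ(b_i − b̄)² > 0, the empirical probabilistic estimator D̂^P := (Σ b_i f_i)/(Σ b_i) − (Σ(1−b_i)f_i)/(Σ(1−b_i)) and the empirical linear estimator D̂^L := Σ(f_i − f̄)(b_i − b̄)/Σ(b_i − b̄)² satisfy D̂^P = D̂^L · s_b² / (b̄(1 − b̄)). -/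
/-- Finite-sample identity: `D̂^P = D̂^L · s_b² / (b̄(1 - b̄))` for a finite dataset with
`b_i ∈ [0,1]`, `b̄ ∈ (0,1)` and positive sample variance. -/
theorem stmt_15 (n : ℕ) (hn : 0 < n) (f b : Fin n → ℝ)
    (hbval : ∀ i, b i ∈ Set.Icc (0 : ℝ) 1)
    (bbar : ℝ) (hbbar : bbar = (∑ i, b i) / n)
    (hbbar0 : 0 < bbar) (hbbar1 : bbar < 1)
    (fbar : ℝ) (hfbar : fbar = (∑ i, f i) / n)
    (s2 : ℝ) (hs2 : s2 = (∑ i, (b i - bbar) ^ 2) / n) (hs2pos : 0 < s2)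
    (DP DL : ℝ)
    (hDP : DP = (∑ i, b i * f i) / (∑ i, b i)
        - (∑ i, (1 - b i) * f i) / (∑ i, (1 - b i)))
    (hDL : DL = (∑ i, (f i - fbar) * (b i - bbar)) / (∑ i, (b i - bbar) ^ 2)) :
    DP = DL * s2 / (bbar * (1 - bbar)) := by
  have hn' : (n : ℝ) ≠ 0 := Nat.cast_ne_zero.mpr hn.ne'
  have hSb : ∑ i, b i = n * bbar := by rw [hbbar]; field_simp
  have hSf : ∑ i, f i = n * fbar := by rw [hfbar]; field_simp
  have hS2 : ∑ i, (b i - bbar) ^ 2 = n * s2 := by rw [hs2]; field_simp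
  have h1 : ∑ i, (1 - b i) * f i = n * fbar - ∑ i, b i * f i := by
    simp [sub_mul, Finset.sum_sub_distrib, hSf]
  have h2 : ∑ i, (1 - b i) = n - n * bbar := by
    simp [Finset.sum_sub_distrib, hSb]
  have h3 : ∑ i, (f i - fbar) * (b i - bbar)
      = (∑ i, b i * f i) - n * fbar * bbar := by
    have he : ∀ i, (f i - fbar) * (b i - bbar)
        = b i * f i - fbar * b i - bbar * f i + fbar * bbar := by
      intro i; ring
    simp_rw [he]
    rw [Finset.sum_add_distrib, Finset.sum_sub_distrib, Finset.sum_sub_distrib,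
      ← Finset.mul_sum, ← Finset.mul_sum, hSb, hSf]
    simp
    ring
  have hb0 : bbar ≠ 0 := ne_of_gt hbbar0
  have hb1 : (1 : ℝ) - bbar ≠ 0 := by linarith
  have hs0 : s2 ≠ 0 := ne_of_gt hs2pos
  have h2' : (n : ℝ) - n * bbar = n * (1 - bbar) := by ring
  rw [hDP, hDL, hSb, hS2, h1, h2, h3, h2']
  field_simp
  ring
end
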